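/- arXiv:1305.0891 — 5 statements merged into one kernel-verified Lean document; each statement's English description precedes it below -/
import Mathlib

section
/- In the omni-Lie color algebra E = gl(V) ⊕ V with bracket ⟦A+x, B+y⟧ = [A,B] + (1/2)(Ay − ε(|x|,|y|)Bx) and pairing ⟨A+x, B+y⟩ = (1/2)(Ay + ε(|x|,|y|)Bx), the Jacobiator J₁(e₁,e₂,e₃) := ε(|e₃|,|e₁|)⟦⟦e₁,e₂⟧,e₃⟧ + ε(|e₁|,|e₂|)⟦⟦e₂,e₃⟧,e₁⟧ + ε(|e₂|,|e₃|)⟦⟦e₃,e₁⟧,e₂⟧ equals T(e₁,e₂,e₃) := (1/3){ε(|e₃|,|e₁|)⟨⟦e₁,e₂⟧,e₃⟩ + ε(|e₁|,|e₂|)⟨⟦e₂,e₃⟧,e₁⟩ + ε(|e₂|,|e₃|)⟨⟦e₃,e₁⟧,e₂⟩} for all homogeneous e₁, e₂, e₃. -/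
def IsBicharacter {K G : Type*} [Field K] [AddCommGroup G] (ε : G → G → K) : Prop :=
  (∀ a b : G, ε a b ≠ 0) ∧
  (∀ a b c : G, ε a (b + c) = ε a b * ε a c) ∧
  (∀ a b c : G, ε (a + b) c = ε a c * ε b c) ∧
  (∀ a b : G, ε a b * ε b a = 1)

/-- `A` is a homogeneous endomorphism of degree `a` of the graded vector space `V`. -/
def glGrade {K G V : Type*} [Field K] [AddCommGroup G] [AddCommGroup V] [Module K V]
    (𝒜 : G → Submodule K V) (a : G) (A : V →ₗ[K] V) : Prop :=
  ∀ b : G, ∀ v ∈ 𝒜 b, A v ∈ 𝒜 (a + b)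

/-- The color commutator on `gl(V)`: `[A,B] = AB − ε(a,b) BA`. -/
def glB {K G V : Type*} [Field K] [AddCommGroup G] [AddCommGroup V] [Module K V]
    (ε : G → G → K) (a b : G) (A B : V →ₗ[K] V) : V →ₗ[K] V :=
  A ∘ₗ B - ε a b • (B ∘ₗ A)

/-- The skew-symmetrized omni-Lie color bracket on `gl(V) ⊕ V`:
`⟦A+x, B+y⟧ = [A,B] + (1/2)(Ay − ε(a,b) Bx)`. -/
def omB {K G V : Type*} [Field K] [AddCommGroup G] [AddCommGroup V] [Module K V]
    (ε : G → G → K) (a b : G) (e f : (V →ₗ[K] V) × V) : (V →ₗ[K] V) × V :=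
  (glB ε a b e.1 f.1, (2 : K)⁻¹ • (e.1 f.2 - ε a b • f.1 e.2))

/-- The symmetric pairing on `gl(V) ⊕ V`: `⟨A+x, B+y⟩ = (1/2)(Ay + ε(a,b) Bx)`. -/
def omP {K G V : Type*} [Field K] [AddCommGroup G] [AddCommGroup V] [Module K V]
    (ε : G → G → K) (a b : G) (e f : (V →ₗ[K] V) × V) : V :=
  (2 : K)⁻¹ • (e.1 f.2 + ε a b • f.1 e.2)

/-- `T(e₁,e₂,e₃)`, the cyclic sum of pairings of brackets. -/
def omT {K G V : Type*} [Field K] [AddCommGroup G] [AddCommGroup V] [Module K V]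
    (ε : G → G → K) (a b c : G) (e₁ e₂ e₃ : (V →ₗ[K] V) × V) : V :=
  (3 : K)⁻¹ • (ε c a • omP ε (a + b) c (omB ε a b e₁ e₂) e₃
    + ε a b • omP ε (b + c) a (omB ε b c e₂ e₃) e₁
    + ε b c • omP ε (c + a) b (omB ε c a e₃ e₁) e₂)

set_option maxHeartbeats 2000000 in
theorem stmt5 {K G V : Type*} [Field K] [CharZero K] [AddCommGroup G]
    [AddCommGroup V] [Module K V]
    (ε : G → G → K) (hε : IsBicharacter ε) (𝒜 : G → Submodule K V)
    (a b c : G) (A B C : V →ₗ[K] V) (x y z : V)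
    (hA : glGrade 𝒜 a A) (hx : x ∈ 𝒜 a)
    (hB : glGrade 𝒜 b B) (hy : y ∈ 𝒜 b)
    (hC : glGrade 𝒜 c C) (hz : z ∈ 𝒜 c) :
    -- the Jacobiator J₁ equals T (viewed inside gl(V) ⊕ V)
    ε c a • omB ε (a + b) c (omB ε a b (A, x) (B, y)) (C, z)
      + ε a b • omB ε (b + c) a (omB ε b c (B, y) (C, z)) (A, x)
      + ε b c • omB ε (c + a) b (omB ε c a (C, z) (A, x)) (B, y)
    = ((0 : V →ₗ[K] V), omT ε a b c (A, x) (B, y) (C, z)) := by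
  obtain ⟨hne, hR, hL, hS⟩ := hε
  have eab : ε (a + b) c = ε a c * ε b c := hL a b c
  have ebc : ε (b + c) a = ε b a * ε c a := hL b c a
  have eca : ε (c + a) b = ε c b * ε a b := hL c a b
  have hba : ε b a = (ε a b)⁻¹ := eq_inv_of_mul_eq_one_left (by linear_combination hS a b)
  have hcb : ε c b = (ε b c)⁻¹ := eq_inv_of_mul_eq_one_left (by linear_combination hS b c)
  have hac : ε a c = (ε c a)⁻¹ := eq_inv_of_mul_eq_one_left (by linear_combination hS c a)
  refine Prod.ext ?_ ?_
  · ext v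
    simp only [omB, glB, eab, ebc, eca, hba, hcb, hac, LinearMap.add_apply, LinearMap.smul_apply,
      LinearMap.sub_apply, LinearMap.comp_apply, LinearMap.coe_comp, Function.comp_apply,
      LinearMap.zero_apply, Prod.mk_add_mk, Prod.smul_mk, smul_smul, map_sub, map_smul]
    match_scalars
    all_goals field_simp [hne a b, hne b c, hne c a]
    all_goals first
      | ring1
      | linear_combination ((2*ε c a*ε a b)) * mul_inv_cancel₀ (hne a b)
      | linear_combination (-(2*ε c a*ε a b)) * mul_inv_cancel₀ (hne a b)
      | linear_combination ((2*ε c a*ε b c)) * mul_inv_cancel₀ (hne a b)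
      | linear_combination (-(2*ε c a*ε b c)) * mul_inv_cancel₀ (hne a b)
      | linear_combination ((2*ε a b*ε b c)) * mul_inv_cancel₀ (hne a b)
      | linear_combination (-(2*ε a b*ε b c)) * mul_inv_cancel₀ (hne a b)
      | linear_combination ((2*ε c a*ε a b*ε b c)) * mul_inv_cancel₀ (hne a b)
      | linear_combination (-(2*ε c a*ε a b*ε b c)) * mul_inv_cancel₀ (hne a b)
      | linear_combination ((2*ε c a*ε a b)) * mul_inv_cancel₀ (hne b c)
      | linear_combination (-(2*ε c a*ε a b)) * mul_inv_cancel₀ (hne b c)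
      | linear_combination ((2*ε c a*ε b c)) * mul_inv_cancel₀ (hne b c)
      | linear_combination (-(2*ε c a*ε b c)) * mul_inv_cancel₀ (hne b c)
      | linear_combination ((2*ε a b*ε b c)) * mul_inv_cancel₀ (hne b c)
      | linear_combination (-(2*ε a b*ε b c)) * mul_inv_cancel₀ (hne b c)
      | linear_combination ((2*ε c a*ε a b*ε b c)) * mul_inv_cancel₀ (hne b c)
      | linear_combination (-(2*ε c a*ε a b*ε b c)) * mul_inv_cancel₀ (hne b c)
      | linear_combination ((2*ε c a*ε a b)) * mul_inv_cancel₀ (hne c a)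
      | linear_combination (-(2*ε c a*ε a b)) * mul_inv_cancel₀ (hne c a)
      | linear_combination ((2*ε c a*ε b c)) * mul_inv_cancel₀ (hne c a)
      | linear_combination (-(2*ε c a*ε b c)) * mul_inv_cancel₀ (hne c a)
      | linear_combination ((2*ε a b*ε b c)) * mul_inv_cancel₀ (hne c a)
      | linear_combination (-(2*ε a b*ε b c)) * mul_inv_cancel₀ (hne c a)
      | linear_combination ((2*ε c a*ε a b*ε b c)) * mul_inv_cancel₀ (hne c a)
      | linear_combination (-(2*ε c a*ε a b*ε b c)) * mul_inv_cancel₀ (hne c a)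
  · simp only [omB, omT, omP, glB, eab, ebc, eca, hba, hcb, hac, LinearMap.add_apply, LinearMap.smul_apply,
      LinearMap.sub_apply, LinearMap.comp_apply, LinearMap.coe_comp, Function.comp_apply,
      Prod.mk_add_mk, Prod.smul_mk, smul_smul, map_sub, map_smul, smul_sub, smul_add]
    match_scalars
    all_goals field_simp [hne a b, hne b c, hne c a]
    all_goals first
      | ring1
      | linear_combination ((2*ε c a*ε a b)) * mul_inv_cancel₀ (hne a b)
      | linear_combination (-(2*ε c a*ε a b)) * mul_inv_cancel₀ (hne a b)
      | linear_combination ((2*ε c a*ε b c)) * mul_inv_cancel₀ (hne a b)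
      | linear_combination (-(2*ε c a*ε b c)) * mul_inv_cancel₀ (hne a b)
      | linear_combination ((2*ε a b*ε b c)) * mul_inv_cancel₀ (hne a b)
      | linear_combination (-(2*ε a b*ε b c)) * mul_inv_cancel₀ (hne a b)
      | linear_combination ((2*ε c a*ε a b*ε b c)) * mul_inv_cancel₀ (hne a b)
      | linear_combination (-(2*ε c a*ε a b*ε b c)) * mul_inv_cancel₀ (hne a b)
      | linear_combination ((2*ε c a*ε a b)) * mul_inv_cancel₀ (hne b c)
      | linear_combination (-(2*ε c a*ε a b)) * mul_inv_cancel₀ (hne b c)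
      | linear_combination ((2*ε c a*ε b c)) * mul_inv_cancel₀ (hne b c)
      | linear_combination (-(2*ε c a*ε b c)) * mul_inv_cancel₀ (hne b c)
      | linear_combination ((2*ε a b*ε b c)) * mul_inv_cancel₀ (hne b c)
      | linear_combination (-(2*ε a b*ε b c)) * mul_inv_cancel₀ (hne b c)
      | linear_combination ((2*ε c a*ε a b*ε b c)) * mul_inv_cancel₀ (hne b c)
      | linear_combination (-(2*ε c a*ε a b*ε b c)) * mul_inv_cancel₀ (hne b c)
      | linear_combination ((2*ε c a*ε a b)) * mul_inv_cancel₀ (hne c a)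
      | linear_combination (-(2*ε c a*ε a b)) * mul_inv_cancel₀ (hne c a)
      | linear_combination ((2*ε c a*ε b c)) * mul_inv_cancel₀ (hne c a)
      | linear_combination (-(2*ε c a*ε b c)) * mul_inv_cancel₀ (hne c a)
      | linear_combination ((2*ε a b*ε b c)) * mul_inv_cancel₀ (hne c a)
      | linear_combination (-(2*ε a b*ε b c)) * mul_inv_cancel₀ (hne c a)
      | linear_combination ((2*ε c a*ε a b*ε b c)) * mul_inv_cancel₀ (hne c a)
      | linear_combination (-(2*ε c a*ε a b*ε b c)) * mul_inv_cancel₀ (hne c a)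
end

section
/- Let (V, ω) with ω ε-skew-symmetric and F_ω = {ad_ω(x) + x : x ∈ V} its graph in the omni-Lie color algebra gl(V) ⊕ V. Then F_ω is closed under the bracket ⟦A+x, B+y⟧ = [A,B] + (1/2)(Ay − ε(|x|,|y|)Bx) if and only if ω satisfies the ε-Jacobi identity, i.e. (V, ω) is a Lie color algebra. -/
theorem stmt8 {K G V : Type*} [Field K] [CharZero K] [AddCommGroup G]
    [AddCommGroup V] [Module K V]
    (ε : G → G → K) (hε : IsBicharacter ε) (𝒜 : G → Submodule K V)
    (hsup : (⨆ a : G, 𝒜 a) = ⊤)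
    (ω : V →ₗ[K] V →ₗ[K] V)
    -- ω is graded
    (hgr : ∀ a b : G, ∀ x ∈ 𝒜 a, ∀ y ∈ 𝒜 b, ω x y ∈ 𝒜 (a + b))
    -- ω is ε-skew-symmetric
    (hskew : ∀ a b : G, ∀ x ∈ 𝒜 a, ∀ y ∈ 𝒜 b, ω x y + ε a b • ω y x = 0) :
    -- the graph F_ω is closed under the omni bracket iff ω satisfies the ε-Jacobi identity
    (∀ a b : G, ∀ x ∈ 𝒜 a, ∀ y ∈ 𝒜 b, ∃ w : V,
        omB ε a b (ω x, x) (ω y, y) = (ω w, w)) ↔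
      (∀ a b c : G, ∀ x ∈ 𝒜 a, ∀ y ∈ 𝒜 b, ∀ z ∈ 𝒜 c,
        ω (ω x y) z = ω x (ω y z) - ε a b • ω y (ω x z)) := by

  have h2 : (2:K) ≠ 0 := two_ne_zero
  have hsnd : ∀ a b : G, ∀ x ∈ 𝒜 a, ∀ y ∈ 𝒜 b,
      (2:K)⁻¹ • (ω x y - ε a b • ω y x) = ω x y := by
    intro a b x hx y hy
    have hsk := hskew a b x hx y hy
    have hneg : ε a b • ω y x = -(ω x y) := by
      rw [eq_neg_iff_add_eq_zero, add_comm]; exact hsk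
    rw [hneg, sub_neg_eq_add, ← two_smul K, smul_smul, inv_mul_cancel₀ h2, one_smul]
  constructor
  · intro h a b c x hx y hy z hz
    obtain ⟨w, hw⟩ := h a b x hx y hy
    have hw2 : w = ω x y := by
      have := congrArg Prod.snd hw
      simp only [omB] at this
      rw [← this, hsnd a b x hx y hy]
    have hw1 : glB ε a b (ω x) (ω y) = ω w := congrArg Prod.fst hw
    rw [hw2] at hw1
    have := congrFun (congrArg DFunLike.coe hw1) z
    simpa only [glB, LinearMap.sub_apply, LinearMap.smul_apply, LinearMap.comp_apply]
      using this.symm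
  · intro h a b x hx y hy
    refine ⟨ω x y, ?_⟩
    have hfst : glB ε a b (ω x) (ω y) = ω (ω x y) := by
      have hle : (⨆ c : G, 𝒜 c) ≤
          LinearMap.eqLocus (glB ε a b (ω x) (ω y)) (ω (ω x y)) := by
        apply iSup_le
        intro c z hz
        have hj := h a b c x hx y hy z hz
        show glB ε a b (ω x) (ω y) z = ω (ω x y) z
        simp only [glB, LinearMap.sub_apply, LinearMap.smul_apply, LinearMap.comp_apply]
        exact hj.symm
      refine LinearMap.ext fun z => ?_
      have hz : z ∈ LinearMap.eqLocus (glB ε a b (ω x) (ω y)) (ω (ω x y)) :=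
        hle (hsup ▸ Submodule.mem_top)
      exact hz
    simp only [omB, Prod.ext_iff]
    exact ⟨hfst, hsnd a b x hx y hy⟩
end

section
/- If e₁, e₂, e₃ are elements of a Dirac structure L of the omni-Lie color algebra (gl(V) ⊕ V, ⟦·,·⟧, ⟨·,·⟩), then the Jacobiator vanishes: ε(|e₃|,|e₁|)⟦⟦e₁,e₂⟧,e₃⟧ + ε(|e₁|,|e₂|)⟦⟦e₂,e₃⟧,e₁⟧ + ε(|e₂|,|e₃|)⟦⟦e₃,e₁⟧,e₂⟧ = 0. In particular, every Dirac structure is a Lie color algebra under the restricted bracket. -/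
set_option linter.unusedVariables false in
lemma glB_jacobi {K G V : Type*} [Field K] [AddCommGroup G] [AddCommGroup V] [Module K V]
    (ε : G → G → K) (hε : IsBicharacter ε) (a b c : G) (A B C : V →ₗ[K] V) :
    ε c a • glB ε (a+b) c (glB ε a b A B) C + ε a b • glB ε (b+c) a (glB ε b c B C) A
      + ε b c • glB ε (c+a) b (glB ε c a C A) B = 0 := by
  obtain ⟨hne, hm1, hm2, hsym⟩ := hε
  have hba : ε b a = (ε a b)⁻¹ := eq_inv_of_mul_eq_one_left (hsym b a)
  have hcb : ε c b = (ε b c)⁻¹ := eq_inv_of_mul_eq_one_left (hsym c b)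
  have hac : ε a c = (ε c a)⁻¹ := eq_inv_of_mul_eq_one_left (hsym a c)
  ext v
  simp only [glB, hm2, hba, hcb, hac, LinearMap.add_apply, LinearMap.smul_apply,
    LinearMap.sub_apply, LinearMap.comp_apply, LinearMap.zero_apply, map_sub, map_smul]
  match_scalars <;> field_simp [hne a b, hne b c, hne c a] <;> ring

theorem stmt10 {K G V : Type*} [Field K] [CharZero K] [AddCommGroup G]
    [AddCommGroup V] [Module K V]
    (ε : G → G → K) (hε : IsBicharacter ε) (𝒜 : G → Submodule K V)
    -- a Dirac structure, given by its homogeneous parts 𝕃 a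
    (𝕃 : G → Set ((V →ₗ[K] V) × V))
    -- 𝕃 consists of homogeneous elements
    (hhom : ∀ a : G, ∀ e ∈ 𝕃 a, glGrade 𝒜 a e.1 ∧ e.2 ∈ 𝒜 a)
    -- 𝕃 is isotropic
    (hiso : ∀ a b : G, ∀ e ∈ 𝕃 a, ∀ f ∈ 𝕃 b, omP ε a b e f = 0)
    -- 𝕃 is closed under the bracket
    (hcl : ∀ a b : G, ∀ e ∈ 𝕃 a, ∀ f ∈ 𝕃 b, omB ε a b e f ∈ 𝕃 (a + b)) :
    -- the Jacobiator vanishes on 𝕃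
    ∀ a b c : G, ∀ e₁ ∈ 𝕃 a, ∀ e₂ ∈ 𝕃 b, ∀ e₃ ∈ 𝕃 c,
      ε c a • omB ε (a + b) c (omB ε a b e₁ e₂) e₃
        + ε a b • omB ε (b + c) a (omB ε b c e₂ e₃) e₁
        + ε b c • omB ε (c + a) b (omB ε c a e₃ e₁) e₂ = 0 := by
  obtain ⟨hne, hm1, hm2, hsym⟩ := id hε
  intro a b c e₁ he₁ e₂ he₂ e₃ he₃
  have h2 : (2:K)⁻¹ ≠ 0 := inv_ne_zero two_ne_zero
  -- isotropy in convenient form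
  have key : ∀ p q : G, ∀ ef ∈ 𝕃 p, ∀ eg ∈ 𝕃 q, ef.1 eg.2 = -(ε p q • eg.1 ef.2) := by
    intro p q ef hef eg heg
    have h := hiso p q ef hef eg heg
    unfold omP at h
    rcases smul_eq_zero.mp h with h | h
    · exact absurd h h2
    · exact eq_neg_of_add_eq_zero_left h
  -- vector part of the bracket of two elements of 𝕃
  have brV : ∀ p q : G, ∀ ef ∈ 𝕃 p, ∀ eg ∈ 𝕃 q, (omB ε p q ef eg).2 = ef.1 eg.2 := by
    intro p q ef hef eg heg
    show (2:K)⁻¹ • (ef.1 eg.2 - ε p q • eg.1 ef.2) = ef.1 eg.2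
    rw [key p q ef hef eg heg]
    module
  -- level-2 relation
  have lvl2 : ∀ p q r : G, ∀ ef ∈ 𝕃 p, ∀ eg ∈ 𝕃 q, ∀ eh ∈ 𝕃 r,
      ef.1 (eg.1 eh.2) - ε p q • eg.1 (ef.1 eh.2)
        = -((ε p r * ε q r) • eh.1 (ef.1 eg.2)) := by
    intro p q r ef hef eg heg eh heh
    have h := key (p+q) r (omB ε p q ef eg) (hcl p q ef hef eg heg) eh heh
    rw [brV p q ef hef eg heg, hm2] at h
    simpa [omB, glB, LinearMap.sub_apply, LinearMap.smul_apply, LinearMap.comp_apply] using h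
  refine Prod.ext ?_ ?_
  · simpa [omB, Prod.fst_add, Prod.smul_fst] using glB_jacobi ε hε a b c e₁.1 e₂.1 e₃.1
  · -- second component
    have hinner : e₂.1 (e₁.1 e₃.2) = -(ε a c • e₂.1 (e₃.1 e₁.2)) := by
      rw [key a c e₁ he₁ e₃ he₃]; simp
    have E := lvl2 a b c e₁ he₁ e₂ he₂ e₃ he₃
    rw [hinner] at E
    -- E : u + (ε a b * ε a c) • v + ... = -((ε a c * ε b c) • w)
    -- Goal reduction
    have t1 := lvl2 a b c e₁ he₁ e₂ he₂ e₃ he₃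
    have t2 := lvl2 b c a e₂ he₂ e₃ he₃ e₁ he₁
    have t3 := lvl2 c a b e₃ he₃ e₁ he₁ e₂ he₂
    have p12 : omB ε a b e₁ e₂ = (glB ε a b e₁.1 e₂.1, e₁.1 e₂.2) :=
      Prod.ext rfl (brV a b e₁ he₁ e₂ he₂)
    have p23 : omB ε b c e₂ e₃ = (glB ε b c e₂.1 e₃.1, e₂.1 e₃.2) :=
      Prod.ext rfl (brV b c e₂ he₂ e₃ he₃)
    have p31 : omB ε c a e₃ e₁ = (glB ε c a e₃.1 e₁.1, e₃.1 e₁.2) :=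
      Prod.ext rfl (brV c a e₃ he₃ e₁ he₁)
    rw [p12, p23, p31]
    simp only [omB, Prod.snd_add, Prod.smul_snd, glB, LinearMap.sub_apply,
      LinearMap.smul_apply, LinearMap.comp_apply, hm2, Prod.snd_zero]
    rw [t1, t2, t3]
    have main : ε c a • e₁.1 (e₂.1 e₃.2) + ε a b • e₂.1 (e₃.1 e₁.2)
        + ε b c • e₃.1 (e₁.1 e₂.2) = 0 := by
      have hu := eq_add_of_sub_eq E
      apply smul_right_injective V (hne a c)
      show ε a c • _ = ε a c • (0:V)
      rw [smul_zero, smul_add, smul_add, smul_smul, smul_smul, smul_smul, hsym a c, hu]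
      module
    have shrink : ∀ (t s : K) (y : V), t • ((2:K)⁻¹ • (-(s • y) - s • y)) = -((t*s) • y) := by
      intro t s y; module
    have hc1 : ε c a * (ε a c * ε b c) = ε b c := by
      rw [← mul_assoc, mul_comm (ε c a) (ε a c), hsym a c, one_mul]
    have hc2 : ε a b * (ε b a * ε c a) = ε c a := by
      rw [← mul_assoc, hsym a b, one_mul]
    have hc3 : ε b c * (ε c b * ε a b) = ε a b := by
      rw [← mul_assoc, hsym b c, one_mul]
    rw [shrink, shrink, shrink, hc1, hc2, hc3]
    linear_combination (norm := module) -main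
end

section
/- Let L ⊆ gl(V) ⊕ V be of the form L = D ⊕ {π(x) + x : x ∈ D⁰} where D ⊆ gl(V) is a graded subspace, D⁰ = {x ∈ V : X(x) = 0 ∀X ∈ D}, and π: V → gl(V) is a grade-preserving ε-skew-symmetric linear map (π(x)(y) + ε(|x|,|y|)π(y)(x) = 0). Then L is isotropic with respect to the pairing ⟨A+x, B+y⟩ = (1/2)(Ay + ε(|x|,|y|)Bx), and L equals its orthogonal complement L^⊥ (L is maximal isotropic). -/
theorem stmt11 {K G V : Type*} [Field K] [CharZero K] [AddCommGroup G]
    [AddCommGroup V] [Module K V]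
    (ε : G → G → K) (hε : IsBicharacter ε) (𝒜 : G → Submodule K V)
    -- a graded subspace D of gl(V), given by its homogeneous parts
    (D : G → Set (V →ₗ[K] V))
    (hDhom : ∀ a : G, ∀ X ∈ D a, glGrade 𝒜 a X)
    (hD0 : ∀ a : G, (0 : V →ₗ[K] V) ∈ D a)
    -- the null space D⁰ of D
    (D0 : Set V) (hD0def : D0 = {x : V | ∀ a : G, ∀ X ∈ D a, X x = 0})
    -- D is the full (graded) annihilator of D⁰, i.e. D = (D⁰)⁰
    (hmax : ∀ a : G, ∀ X : V →ₗ[K] V, glGrade 𝒜 a X →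
      (∀ b : G, ∀ x ∈ D0, x ∈ 𝒜 b → X x = 0) → X ∈ D a)
    -- π is a grade-preserving ε-skew-symmetric linear map V → gl(V)
    (π : V →ₗ[K] (V →ₗ[K] V))
    (hπgr : ∀ a : G, ∀ x ∈ 𝒜 a, glGrade 𝒜 a (π x))
    (hπskew : ∀ a b : G, ∀ x ∈ 𝒜 a, ∀ y ∈ 𝒜 b, π x y + ε a b • π y x = 0) :
    -- L = D ⊕ {π(x) + x : x ∈ D⁰} is isotropic ...
    (∀ a b : G, ∀ X ∈ D a, ∀ x ∈ D0, x ∈ 𝒜 a → ∀ Y ∈ D b, ∀ y ∈ D0, y ∈ 𝒜 b →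
      omP ε a b (X + π x, x) (Y + π y, y) = 0) ∧
    -- ... and maximal isotropic: every homogeneous element orthogonal to L lies in L
    (∀ a : G, ∀ C : V →ₗ[K] V, glGrade 𝒜 a C → ∀ z ∈ 𝒜 a,
      (∀ b : G, ∀ Y ∈ D b, ∀ y ∈ D0, y ∈ 𝒜 b → omP ε a b (C, z) (Y + π y, y) = 0) →
      ∃ X ∈ D a, ∃ x ∈ D0, x ∈ 𝒜 a ∧ (C, z) = (X + π x, x)) := by
  subst hD0def
  have h2 : (2 : K)⁻¹ ≠ 0 := by norm_num
  constructor
  · intro a b X hX x hx hxa Y hY y hy hyb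
    have hXy : X y = 0 := hy a X hX
    have hYx : Y x = 0 := hx b Y hY
    have hskew : π x y + ε a b • π y x = 0 := hπskew a b x hxa y hyb
    simp only [omP, LinearMap.add_apply, hXy, hYx, zero_add, smul_add, smul_zero]
    rw [← smul_add, hskew, smul_zero]
  · intro a C hC z hz horth
    have hzD0 : z ∈ {x : V | ∀ a : G, ∀ X ∈ D a, X x = 0} := by
      intro b Y hY
      have h0D : (0 : V) ∈ {x : V | ∀ a : G, ∀ X ∈ D a, X x = 0} := by
        intro c X _; simp
      have h := horth b Y hY 0 h0D (Submodule.zero_mem _)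
      simp only [omP, map_zero, LinearMap.add_apply, zero_add] at h
      rcases smul_eq_zero.mp h with h' | h'
      · exact absurd h' h2
      · rcases smul_eq_zero.mp h' with h'' | h''
        · exact absurd h'' (hε.1 a b)
        · simpa using h''
    have hCy : ∀ b : G, ∀ y ∈ {x : V | ∀ a : G, ∀ X ∈ D a, X x = 0}, y ∈ 𝒜 b →
        (C - π z) y = 0 := by
      intro b y hy hyb
      have h := horth b 0 (hD0 b) y hy hyb
      simp only [omP, zero_add, LinearMap.add_apply] at h
      rcases smul_eq_zero.mp h with h' | h'
      · exact absurd h' h2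
      · have hsk : π z y + ε a b • π y z = 0 := hπskew a b z hz y hyb
        have hCeq : C y = -(ε a b • π y z) := by
          have := eq_neg_of_add_eq_zero_left h'; simpa using this
        have hπeq : π z y = -(ε a b • π y z) := eq_neg_of_add_eq_zero_left hsk
        simp [LinearMap.sub_apply, hCeq, hπeq]
    have hXgr : glGrade 𝒜 a (C - π z) := by
      intro b v hv
      have h1 := hC b v hv
      have h2' := hπgr a z hz b v hv
      simpa using Submodule.sub_mem _ h1 h2'
    have hXD : C - π z ∈ D a := hmax a (C - π z) hXgr hCy
    exact ⟨C - π z, hXD, z, hzD0, hz, by simp⟩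
end

section
/- Let (g, [·,·], B) be a quadratic Lie color algebra. Define V₁ = K, V₀ = g, d = 0, l₂(x,y) = [x,y], l₂(x,h) = 0, and l₃(x,y,z) = B([x,y],z). Then (V₁ →⁰ V₀, l₂, l₃) is a 2-term color L∞-algebra; in particular l₃ is totally ε-skew-symmetric and satisfies the cocycle condition δl₃(x,y,z,w) = 0 of condition (i). -/
theorem stmt15 {K G L : Type*} [Field K] [CharZero K] [AddCommGroup G]
    [AddCommGroup L] [Module K L]
    (ε : G → G → K) (hε : IsBicharacter ε) (𝒜 : G → Submodule K L)
    -- a Lie color algebra structure on L = g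
    (br : L →ₗ[K] L →ₗ[K] L)
    (hgr : ∀ a b : G, ∀ x ∈ 𝒜 a, ∀ y ∈ 𝒜 b, br x y ∈ 𝒜 (a + b))
    (hskew : ∀ a b : G, ∀ x ∈ 𝒜 a, ∀ y ∈ 𝒜 b, br x y + ε a b • br y x = 0)
    (hjac : ∀ a b c : G, ∀ x ∈ 𝒜 a, ∀ y ∈ 𝒜 b, ∀ z ∈ 𝒜 c,
      br (br x y) z = br x (br y z) - ε a b • br y (br x z))
    -- an ε-symmetric invariant nondegenerate bilinear form (quadratic structure)
    (B : L →ₗ[K] L →ₗ[K] K)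
    (hBsym : ∀ a b : G, ∀ x ∈ 𝒜 a, ∀ y ∈ 𝒜 b, B x y = ε a b * B y x)
    (hBinv : ∀ x y z : L, B (br x y) z = B x (br y z))
    (hBnd : ∀ x : L, (∀ y : L, B x y = 0) → x = 0) :
    -- with V₁ = K, V₀ = g, d = 0, l₂(x,y) = [x,y], l₂(x,h) = 0, l₃(x,y,z) = B([x,y],z),
    -- the data forms a 2-term color L∞-algebra: l₃ is totally ε-skew-symmetric ...
    (∀ a b c : G, ∀ x ∈ 𝒜 a, ∀ y ∈ 𝒜 b, ∀ z ∈ 𝒜 c,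
      (B (br x y) z = -(ε a b * B (br y x) z)) ∧
      (B (br x y) z = -(ε b c * B (br x z) y))) ∧
    -- ... and satisfies the cocycle condition (i) (the terms l₂(·, l₃(·,·,·)) vanish
    -- since l₂(x,h) = 0 for h ∈ V₁ = K)
    (∀ a b c e : G, ∀ w ∈ 𝒜 a, ∀ x ∈ 𝒜 b, ∀ y ∈ 𝒜 c, ∀ z ∈ 𝒜 e,
      B (br (br w x) y) z + B (br w x) (br y z)
          + ε c e * B (br w (br x z)) y + ε (b + c) e * B (br (br w z) x) y
        = B (br w (br x y)) z + ε b c * B (br (br w y) x) z) := by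

  obtain ⟨hne, hmul1, hmul2, hinv⟩ := hε
  -- helper: br x y = -(ε a b • br y x)
  have hsk : ∀ a b : G, ∀ x ∈ 𝒜 a, ∀ y ∈ 𝒜 b, br x y = -(ε a b • br y x) := by
    intro a b x hx y hy
    have h := hskew a b x hx y hy
    have := eq_neg_of_add_eq_zero_left h
    simpa using this
  constructor
  · intro a b c x hx y hy z hz
    constructor
    · rw [hsk a b x hx y hy]
      simp
    · rw [hBinv, hsk b c y hy z hz]
      simp [hBinv]
  · intro a b c e w hw x hx y hy z hz
    have hwy := hgr a c w hw y hy
    have hxz := hgr b e x hx z hz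
    have hxy := hgr b c x hx y hy
    -- A1
    have hA1 : B (br (br w x) y) z
        = B (br w (br x y)) z + (ε a b * (ε b a * ε b c)) * B (br (br w y) x) z := by
      rw [hjac a b c w hw x hx y hy]
      rw [hsk b (a + c) x hx _ hwy]
      simp [hmul1, mul_assoc]
    -- A2
    have hA2 : B (br w x) (br y z)
        = B w (br (br x y) z) + ε b c * B w (br y (br x z)) := by
      rw [hBinv]
      have : br x (br y z) = br (br x y) z + ε b c • br y (br x z) := by
        rw [hjac b c e x hx y hy z hz]; abel
      rw [this]
      simp
    -- A3
    have hA3 : B (br w (br x z)) y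
        = -((ε b c * ε e c) * B w (br y (br x z))) := by
      rw [hBinv, hsk (b + e) c _ hxz y hy]
      simp [hmul2]
    -- A4
    have hA4 : B (br (br w z) x) y
        = -((ε e b * ε e c) * B w (br (br x y) z)) := by
      rw [hBinv, hBinv, hsk e (b + c) z hz _ hxy]
      simp [hmul1]
    rw [hA1, hA2, hA3, hA4, hBinv, hmul2 b c e]
    have h1 := hinv a b
    have h2 := hinv c e
    have h3 := hinv b e
    linear_combination (ε b c * B (br (br w y) x) z) * h1
      + (-(ε b c * B w (br y (br x z))) - B w (br (br x y) z)) * h2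
      + (-(ε c e * ε e c * B w (br (br x y) z))) * h3
end
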